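/- arXiv:2605.11141 — 5 statements merged into one kernel-verified Lean document; each statement's English description precedes it below -/
import Mathlib

section
/- Let J ⊆ ℝ be an open interval, let ε₁, ε₂, ε₃ ∈ {−1, 1} with ε₁ε₂ = −ε₃, let ϱ ≠ 0 be a real constant, and set A := ε₁ + ε₂/ϱ². Let a, b, c, κ, τ : J → ℝ be differentiable functions satisfying the Sasakian Frenet–Reeb system a' = ε₂κb, b' = −ε₁κa − ε₃(τ−1)c, c' = ε₂(τ−1)b, together with the whirl condition a = ϱb on J. Assume that on J one has κ(s) > 0, a(s) ≠ 0, τ(s) ≠ 1, and A ≠ 0. Then for every s ∈ J the torsion function satisfies τ'(s) = (τ(s)−1)·( ε₂ε₃(τ(s)−1)²/(ϱκ(s)A) + κ'(s)/κ(s) + ε₂κ(s)/ϱ ). -/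
/-!
Differentiating the whirl condition `a = ϱ b` and comparing with `a' = ε₂ κ b` gives
`b' = ε₂ κ b / ϱ`; substituted into the equation for `b'`, this yields the algebraic relation
`ε₃ (τ - 1) c = -ϱ A κ b` on the whole interval. Differentiating that relation once more and
eliminating `b'`, `c'` and `c` with the Frenet–Reeb system leaves an equation that is linear in
`τ'`, with the nonzero coefficient `ϱ A κ b`.
-/

open Filter Topology

theorem HasDerivAt.eq_const_mul_of_eventuallyEq {a b : ℝ → ℝ} {α β ϱ s : ℝ}
    (ha : HasDerivAt a α s) (hb : HasDerivAt b β s) (h : ∀ᶠ t in 𝓝 s, a t = ϱ * b t) :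
    α = ϱ * β :=
  ha.unique ((hb.const_mul ϱ).congr_of_eventuallyEq h)

theorem torsion_binormal_relation_of_whirl {ε₁ ε₂ ε₃ ϱ κ τ a b c : ℝ} (hϱ : ϱ ≠ 0)
    (hb' : ε₂ * κ * b = ϱ * (-(ε₁ * κ * a) - ε₃ * (τ - 1) * c)) (hwhirl : a = ϱ * b) :
    ε₃ * ((τ - 1) * c) = -(ϱ * (ε₁ + ε₂ / ϱ ^ 2)) * (κ * b) := by
  subst hwhirl
  field_simp
  linear_combination hb'

theorem deriv_torsion_eq_of_binormal_relation {ε₂ ε₃ ϱ A κ κ' τ τ' b c β : ℝ}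
    (hϱ : ϱ ≠ 0) (hA : A ≠ 0) (hκ : κ ≠ 0) (hb : b ≠ 0)
    (hβ : ε₂ * κ * b = ϱ * β)
    (hrel : ε₃ * ((τ - 1) * c) = -(ϱ * A) * (κ * b))
    (hrel' : ε₃ * (τ' * c + (τ - 1) * (ε₂ * (τ - 1) * b)) = -(ϱ * A) * (κ' * b + κ * β)) :
    τ' = (τ - 1) * (ε₂ * ε₃ * (τ - 1) ^ 2 / (ϱ * κ * A) + κ' / κ + ε₂ * κ / ϱ) := by
  have h : b * ϱ * (τ' * (ϱ * κ * A)) =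
      b * ϱ * ((τ - 1) * (ε₂ * ε₃ * (τ - 1) ^ 2 + ϱ * A * κ' + ε₂ * A * κ ^ 2)) := by
    linear_combination (-ϱ * (τ - 1)) * hrel' + ϱ * τ' * hrel
      - (ϱ * A * (τ - 1) * κ) * hβ
  field_simp
  linear_combination mul_left_cancel₀ (mul_ne_zero hb hϱ) h

theorem torsion_equation_contact_whirl_general
    (p q : ℝ) (ε₁ ε₂ ε₃ ϱ A : ℝ)
    (hϱ : ϱ ≠ 0)
    (hAdef : A = ε₁ + ε₂ / ϱ ^ 2)
    (a b c κ τ : ℝ → ℝ)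
    (hκdiff : ∀ s ∈ Set.Ioo p q, DifferentiableAt ℝ κ s)
    (hτdiff : ∀ s ∈ Set.Ioo p q, DifferentiableAt ℝ τ s)
    (ha' : ∀ s ∈ Set.Ioo p q, HasDerivAt a (ε₂ * κ s * b s) s)
    (hb' : ∀ s ∈ Set.Ioo p q,
      HasDerivAt b (-(ε₁ * κ s * a s) - ε₃ * (τ s - 1) * c s) s)
    (hc' : ∀ s ∈ Set.Ioo p q, HasDerivAt c (ε₂ * (τ s - 1) * b s) s)
    (hwhirl : ∀ s ∈ Set.Ioo p q, a s = ϱ * b s)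
    (hκpos : ∀ s ∈ Set.Ioo p q, 0 < κ s)
    (ha0 : ∀ s ∈ Set.Ioo p q, a s ≠ 0)
    (hA0 : A ≠ 0) :
    ∀ s ∈ Set.Ioo p q,
      deriv τ s = (τ s - 1) *
        (ε₂ * ε₃ * (τ s - 1) ^ 2 / (ϱ * κ s * A)
          + deriv κ s / κ s
          + ε₂ * κ s / ϱ) := by
  have near : ∀ t ∈ Set.Ioo p q, ∀ᶠ u in 𝓝 t, u ∈ Set.Ioo p q :=
    fun t ht => isOpen_Ioo.mem_nhds ht
  have hb'_eq : ∀ t ∈ Set.Ioo p q, ε₂ * κ t * b t =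
      ϱ * (-(ε₁ * κ t * a t) - ε₃ * (τ t - 1) * c t) := fun t ht =>
    (ha' t ht).eq_const_mul_of_eventuallyEq (hb' t ht) ((near t ht).mono hwhirl)
  have hrel : ∀ t ∈ Set.Ioo p q, ε₃ * ((τ t - 1) * c t) = -(ϱ * A) * (κ t * b t) :=
    fun t ht => hAdef ▸ torsion_binormal_relation_of_whirl hϱ (hb'_eq t ht) (hwhirl t ht)
  intro s hs
  have hb0 : b s ≠ 0 := fun h => ha0 s hs (by rw [hwhirl s hs, h, mul_zero])
  have hlhs := (((hτdiff s hs).hasDerivAt.sub_const 1).mul (hc' s hs)).const_mul ε₃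
  have hrhs := ((hκdiff s hs).hasDerivAt.mul (hb' s hs)).const_mul (-(ϱ * A))
  exact deriv_torsion_eq_of_binormal_relation hϱ hA0 (hκpos s hs).ne' hb0 (hb'_eq s hs)
    (hrel s hs) (hlhs.unique (hrhs.congr_of_eventuallyEq ((near s hs).mono hrel)))

/-- **Torsion equation for non-geodesic contact whirl curves (Proposition 3.1).**
On an open interval `J = Ioo p q`, with causal signs `ε₁ ε₂ = -ε₃`, whirl parameter
`ϱ ≠ 0` and `A = ε₁ + ε₂/ϱ²`, the Sasakian Frenet–Reeb system
`a' = ε₂ κ b`, `b' = -ε₁ κ a - ε₃ (τ-1) c`, `c' = ε₂ (τ-1) b` together with the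
whirl condition `a = ϱ b` forces the torsion to satisfy
`τ' = (τ-1) ( ε₂ε₃(τ-1)²/(ϱ κ A) + κ'/κ + ε₂ κ/ϱ )`, provided `κ > 0`, `a ≠ 0`,
`τ ≠ 1` and `A ≠ 0` on `J`. -/
theorem torsion_equation_contact_whirl
    (p q : ℝ) (ε₁ ε₂ ε₃ ϱ A : ℝ)
    (hε₁ : ε₁ = 1 ∨ ε₁ = -1) (hε₂ : ε₂ = 1 ∨ ε₂ = -1) (hε₃ : ε₃ = 1 ∨ ε₃ = -1)
    (hsign : ε₁ * ε₂ = -ε₃) (hϱ : ϱ ≠ 0)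
    (hAdef : A = ε₁ + ε₂ / ϱ ^ 2)
    (a b c κ τ : ℝ → ℝ)
    (hκdiff : ∀ s ∈ Set.Ioo p q, DifferentiableAt ℝ κ s)
    (hτdiff : ∀ s ∈ Set.Ioo p q, DifferentiableAt ℝ τ s)
    (ha' : ∀ s ∈ Set.Ioo p q, HasDerivAt a (ε₂ * κ s * b s) s)
    (hb' : ∀ s ∈ Set.Ioo p q,
      HasDerivAt b (-(ε₁ * κ s * a s) - ε₃ * (τ s - 1) * c s) s)
    (hc' : ∀ s ∈ Set.Ioo p q, HasDerivAt c (ε₂ * (τ s - 1) * b s) s)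
    (hwhirl : ∀ s ∈ Set.Ioo p q, a s = ϱ * b s)
    (hκpos : ∀ s ∈ Set.Ioo p q, 0 < κ s)
    (ha0 : ∀ s ∈ Set.Ioo p q, a s ≠ 0)
    (hτ1 : ∀ s ∈ Set.Ioo p q, τ s ≠ 1)
    (hA0 : A ≠ 0) :
    ∀ s ∈ Set.Ioo p q,
      deriv τ s = (τ s - 1) *
        (ε₂ * ε₃ * (τ s - 1) ^ 2 / (ϱ * κ s * A)
          + deriv κ s / κ s
          + ε₂ * κ s / ϱ) :=
  torsion_equation_contact_whirl_general p q ε₁ ε₂ ε₃ ϱ A hϱ hAdef a b c κ τ hκdiff hτdiff ha' hb'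
    hc' hwhirl hκpos ha0 hA0
end

section
/- Let J ⊆ ℝ be an open interval, let ε₁, ε₂, ε₃ ∈ {−1, 1} with ε₁ε₂ = −ε₃, and let ϱ ≠ 0 be a real constant. Let a, b, c, κ, τ : J → ℝ be differentiable functions satisfying a' = ε₂κb, b' = −ε₁κa − ε₃(τ−1)c, and the whirl condition a = ϱb on J. If κ(s) > 0 and τ(s) ≠ 1 for all s ∈ J, then for every s ∈ J one has c(s) = −κ(s)·(ε₁ + ε₂/ϱ²)·a(s) / (ε₃(τ(s)−1)). -/
/-- **Expression of the binormal Reeb component of a contact whirl curve.**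
On an open interval `J = Ioo p q`, with causal signs `ε₁ ε₂ = -ε₃` and whirl
parameter `ϱ ≠ 0`, if the differentiable functions `a, b, c, κ, τ` satisfy
`a' = ε₂ κ b`, `b' = -ε₁ κ a - ε₃ (τ-1) c` and the whirl condition `a = ϱ b`,
with `κ > 0` and `τ ≠ 1` on `J`, then
`c = -κ (ε₁ + ε₂/ϱ²) a / (ε₃ (τ - 1))` on `J`. -/
theorem binormal_reeb_component_contact_whirl
    (p q : ℝ) (ε₁ ε₂ ε₃ ϱ : ℝ)
    (hε₁ : ε₁ = 1 ∨ ε₁ = -1) (hε₂ : ε₂ = 1 ∨ ε₂ = -1) (hε₃ : ε₃ = 1 ∨ ε₃ = -1)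
    (hsign : ε₁ * ε₂ = -ε₃) (hϱ : ϱ ≠ 0)
    (a b c κ τ : ℝ → ℝ)
    (hcdiff : ∀ s ∈ Set.Ioo p q, DifferentiableAt ℝ c s)
    (hκdiff : ∀ s ∈ Set.Ioo p q, DifferentiableAt ℝ κ s)
    (hτdiff : ∀ s ∈ Set.Ioo p q, DifferentiableAt ℝ τ s)
    (ha' : ∀ s ∈ Set.Ioo p q, HasDerivAt a (ε₂ * κ s * b s) s)
    (hb' : ∀ s ∈ Set.Ioo p q,
      HasDerivAt b (-(ε₁ * κ s * a s) - ε₃ * (τ s - 1) * c s) s)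
    (hwhirl : ∀ s ∈ Set.Ioo p q, a s = ϱ * b s)
    (hκpos : ∀ s ∈ Set.Ioo p q, 0 < κ s)
    (hτ1 : ∀ s ∈ Set.Ioo p q, τ s ≠ 1) :
    ∀ s ∈ Set.Ioo p q,
      c s = -(κ s * (ε₁ + ε₂ / ϱ ^ 2) * a s) / (ε₃ * (τ s - 1)) := by
  intro s hs
  have hb'' := hb' s hs
  have hA : HasDerivAt a (ϱ * (-(ε₁ * κ s * a s) - ε₃ * (τ s - 1) * c s)) s := by
    have h := (hb'').const_mul ϱ
    apply h.congr_of_eventuallyEq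
    have hmem : Set.Ioo p q ∈ nhds s := (isOpen_Ioo).mem_nhds hs
    filter_upwards [hmem] with x hx
    exact hwhirl x hx
  have huniq := hA.unique (ha' s hs)
  have hbs : b s = a s / ϱ := by
    rw [hwhirl s hs]; field_simp
  have hε₃ne : ε₃ ≠ 0 := by rcases hε₃ with h|h <;> simp [h]
  have hτne : τ s - 1 ≠ 0 := sub_ne_zero.mpr (hτ1 s hs)
  have key : ε₃ * (τ s - 1) * c s = -(κ s * (ε₁ + ε₂ / ϱ ^ 2) * a s) := by
    have := huniq
    rw [hbs] at this
    field_simp at this ⊢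
    nlinarith [this]
  field_simp [hε₃ne, hτne] at key ⊢
  linarith [key]
end

section
/- Let I ⊆ ℝ be an interval, ε₂ ∈ {−1, 1}, and let ϱ ≠ 0, λ₀ ≠ 0 be real constants. Let r, β, v : I → ℝ be differentiable and x, y : I → ℝ twice differentiable with x' = r cos β, y' = r sin β, and suppose v'(s) = λ₀v(s) and r(s)²(β'(s) + 2v(s))² = ε₂ϱ²λ₀² + v'(s)² − r'(s)² for all s ∈ I. Then, with A₁ := x'' − 2y'v, A₂ := y'' + 2x'v, A₃ := v', one has A₁(s)² + A₂(s)² − A₃(s)² = ε₂ϱ²λ₀² for every s ∈ I; in particular this squared norm is a nonzero constant. -/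
/-- **Construction principle by quadratures for contact whirl curves
(Section 5.1).**  In the Lorentzian Heisenberg space, let `x' = r cos β`,
`y' = r sin β`, suppose the Reeb component `v` satisfies the whirl equation
`v' = lam₀ v`, and let the polar angle `β` solve
`r²(β' + 2v)² = ε₂ ϱ² lam₀² + v'² − r'²`.  Then the squared norm of the
covariant acceleration, `A₁² + A₂² − A₃²` with `A₁ = x'' − 2 y' v`,
`A₂ = y'' + 2 x' v`, `A₃ = v'`, is identically equal to the nonzero constant
`ε₂ ϱ² lam₀²`. -/
theorem heisenberg_whirl_construction
    (I : Set ℝ) (hI : I.OrdConnected)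
    (ε₂ : ℝ) (hε₂ : ε₂ = 1 ∨ ε₂ = -1)
    (ϱ lam₀ : ℝ) (hϱ : ϱ ≠ 0) (hlam₀ : lam₀ ≠ 0)
    (r β v x y : ℝ → ℝ) (r' β' v' x'' y'' : ℝ → ℝ)
    (hr : ∀ s ∈ I, HasDerivAt r (r' s) s)
    (hβ : ∀ s ∈ I, HasDerivAt β (β' s) s)
    (hv : ∀ s ∈ I, HasDerivAt v (v' s) s)
    (hx : ∀ s ∈ I, HasDerivAt x (r s * Real.cos (β s)) s)
    (hy : ∀ s ∈ I, HasDerivAt y (r s * Real.sin (β s)) s)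
    (hx2 : ∀ s ∈ I, HasDerivAt (fun t => r t * Real.cos (β t)) (x'' s) s)
    (hy2 : ∀ s ∈ I, HasDerivAt (fun t => r t * Real.sin (β t)) (y'' s) s)
    (hode : ∀ s ∈ I, v' s = lam₀ * v s)
    (hβchoice : ∀ s ∈ I,
      (r s) ^ 2 * (β' s + 2 * v s) ^ 2
        = ε₂ * ϱ ^ 2 * lam₀ ^ 2 + (v' s) ^ 2 - (r' s) ^ 2) :
    (∀ s ∈ I,
      (x'' s - 2 * (r s * Real.sin (β s)) * v s) ^ 2
        + (y'' s + 2 * (r s * Real.cos (β s)) * v s) ^ 2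
        - (v' s) ^ 2
      = ε₂ * ϱ ^ 2 * lam₀ ^ 2) ∧
    ε₂ * ϱ ^ 2 * lam₀ ^ 2 ≠ 0 := by
  constructor
  · intro s hs
    have hc : HasDerivAt (fun t => Real.cos (β t)) (-Real.sin (β s) * β' s) s :=
      (Real.hasDerivAt_cos (β s)).comp s (hβ s hs)
    have hsn : HasDerivAt (fun t => Real.sin (β t)) (Real.cos (β s) * β' s) s :=
      (Real.hasDerivAt_sin (β s)).comp s (hβ s hs)
    have hx2' : HasDerivAt (fun t => r t * Real.cos (β t))
        (r' s * Real.cos (β s) + r s * (-Real.sin (β s) * β' s)) s :=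
      (hr s hs).mul hc
    have hy2' : HasDerivAt (fun t => r t * Real.sin (β t))
        (r' s * Real.sin (β s) + r s * (Real.cos (β s) * β' s)) s :=
      (hr s hs).mul hsn
    have ex : x'' s = r' s * Real.cos (β s) + r s * (-Real.sin (β s) * β' s) :=
      (hx2 s hs).unique hx2'
    have ey : y'' s = r' s * Real.sin (β s) + r s * (Real.cos (β s) * β' s) :=
      (hy2 s hs).unique hy2'
    have key := hβchoice s hs
    have pyth : Real.sin (β s) ^ 2 + Real.cos (β s) ^ 2 = 1 :=
      Real.sin_sq_add_cos_sq (β s)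
    rw [ex, ey]
    nlinarith [key, pyth, sq_nonneg (r s), sq_nonneg (β' s + 2 * v s)]
  · have : ϱ ^ 2 * lam₀ ^ 2 ≠ 0 := by positivity
    rcases hε₂ with h | h <;> rw [h] <;> simpa using this
end

section
/- Define v, r : ℝ → ℝ by v(s) = e^s and r(s) = √(1 + e^{2s}), and let β : ℝ → ℝ be any differentiable function with β'(s) = −2e^s + √(1 + 2e^{2s})/(1 + e^{2s}) for all s. Then for every s ∈ ℝ: (i) r(s)² − v(s)² = 1; (ii) v'(s) = v(s); (iii) r(s)²(β'(s) + 2v(s))² = 1 + e^{2s}/(1 + e^{2s}); and (iv) r'(s)² + r(s)²(β'(s) + 2v(s))² − v'(s)² = 1. -/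
/-! With `x = e^{2s} ≥ 0` one has `v² = x`, `r² = 1 + x`, `r' = x/√(1 + x)` and
`β' + 2v = √(1 + 2x)/(1 + x)`, so (i), (iii) and (iv) become rational identities in `x`. -/

open Real

lemma hasDerivAt_sqrt_one_add_exp_two_mul (s : ℝ) :
    HasDerivAt (fun s => √(1 + exp (2 * s))) (exp (2 * s) / √(1 + exp (2 * s))) s := by
  have hexp : HasDerivAt (fun s => 1 + exp (2 * s)) (2 * exp (2 * s)) s := by
    simpa [mul_comm] using ((hasDerivAt_id s).const_mul 2).exp.const_add 1
  convert hexp.sqrt (by positivity) using 1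
  field_simp

lemma one_add_mul_sq_sqrt_one_add_two_mul_div {x : ℝ} (hx : 0 ≤ x) :
    (1 + x) * (√(1 + 2 * x) / (1 + x)) ^ 2 = 1 + x / (1 + x) := by
  rw [div_pow, sq_sqrt (by linarith)]
  field_simp
  ring

lemma sq_div_sqrt_one_add_add_one_add_div_sub {x : ℝ} (hx : 0 ≤ x) :
    (x / √(1 + x)) ^ 2 + (1 + x / (1 + x)) - x = 1 := by
  rw [div_pow, sq_sqrt (by linarith)]
  field_simp
  ring

/-- **Explicit non-Legendre contact whirl data in the Heisenberg space
(Section 5.2.1).**  With `v(s) = e^s`, `r(s) = √(1 + e^{2s})` and `β` any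
differentiable function with
`β' = −2e^s + √(1 + 2e^{2s})/(1 + e^{2s})`, one has for every `s`:
(i) `r² − v² = 1` (unit spacelike tangent);
(ii) `v' = v` (the whirl equation with `λ₀ = 1`);
(iii) `r²(β' + 2v)² = 1 + e^{2s}/(1 + e^{2s})`;
(iv) `r'² + r²(β' + 2v)² − v'² = 1` (constant curvature `κ = 1`). -/
theorem heisenberg_explicit_whirl_example
    (v r β : ℝ → ℝ)
    (hv : v = fun s => Real.exp s)
    (hr : r = fun s => Real.sqrt (1 + Real.exp (2 * s)))
    (hβ : ∀ s : ℝ, HasDerivAt β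
      (-2 * Real.exp s
        + Real.sqrt (1 + 2 * Real.exp (2 * s)) / (1 + Real.exp (2 * s))) s) :
    ∀ s : ℝ,
      (r s) ^ 2 - (v s) ^ 2 = 1 ∧
      HasDerivAt v (v s) s ∧
      (r s) ^ 2 * (deriv β s + 2 * v s) ^ 2
        = 1 + Real.exp (2 * s) / (1 + Real.exp (2 * s)) ∧
      (deriv r s) ^ 2 + (r s) ^ 2 * (deriv β s + 2 * v s) ^ 2
        - (deriv v s) ^ 2 = 1 := by
  intro s
  subst hv hr
  have hE : 0 ≤ exp (2 * s) := (exp_pos _).le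
  have hv2 : exp s ^ 2 = exp (2 * s) := by rw [← exp_nat_mul]; norm_num
  have hr2 : √(1 + exp (2 * s)) ^ 2 = 1 + exp (2 * s) := sq_sqrt (by positivity)
  have hβv : deriv β s + 2 * exp s
      = √(1 + 2 * exp (2 * s)) / (1 + exp (2 * s)) := by
    rw [(hβ s).deriv]; ring
  have hiii : √(1 + exp (2 * s)) ^ 2 * (deriv β s + 2 * exp s) ^ 2
      = 1 + exp (2 * s) / (1 + exp (2 * s)) := by
    rw [hr2, hβv]; exact one_add_mul_sq_sqrt_one_add_two_mul_div hE
  refine ⟨by rw [hr2, hv2]; ring, hasDerivAt_exp s, hiii, ?_⟩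
  rw [hiii, (hasDerivAt_sqrt_one_add_exp_two_mul s).deriv, (hasDerivAt_exp s).deriv, hv2]
  exact sq_div_sqrt_one_add_add_one_add_div_sub hE
end

section
/- Let R > 0 and ω ≠ 0 be real numbers with R²ω² = 1, and define x, y, z : ℝ → ℝ by x(s) = R cos(ωs), y(s) = R sin(ωs), z(s) = R²ωs. Set v(s) := z'(s) + y(s)x'(s) − x(s)y'(s). Then for every s ∈ ℝ: (i) v(s) = 0; (ii) x'(s)² + y'(s)² − v(s)² = 1; and (iii) the triple (x''(s) − 2y'(s)v(s), y''(s) + 2x'(s)v(s), v'(s)) equals (−Rω²cos(ωs), −Rω²sin(ωs), 0), which is a nonzero vector whose third component vanishes. -/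
/-!
Along the circle `(R cos ωs, R sin ωs)` the term `y x' - x y'` of the contact form is the
constant `-R²ω`, which the vertical speed `z' = R²ω` cancels exactly, so `v ≡ 0`. With `v`
gone, speed and acceleration are those of the planar circle: `x'² + y'² = R²ω² = 1` and
`(x'', y'') = -ω² (x, y)`, which is nonzero because `R ω ≠ 0`.
-/

open Real

section Circle

variable (a ω : ℝ)

theorem hasDerivAt_const_mul_cos_mul (s : ℝ) :
    HasDerivAt (fun s => a * cos (ω * s)) (-(a * ω) * sin (ω * s)) s :=
  (((hasDerivAt_cos (ω * s)).comp s ((hasDerivAt_id s).const_mul ω)).const_mul a).congr_deriv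
    (by ring)

theorem hasDerivAt_const_mul_sin_mul (s : ℝ) :
    HasDerivAt (fun s => a * sin (ω * s)) (a * ω * cos (ω * s)) s :=
  (((hasDerivAt_sin (ω * s)).comp s ((hasDerivAt_id s).const_mul ω)).const_mul a).congr_deriv
    (by ring)

theorem deriv_const_mul_cos_mul :
    deriv (fun s => a * cos (ω * s)) = fun s => -(a * ω) * sin (ω * s) :=
  funext fun s => (hasDerivAt_const_mul_cos_mul a ω s).deriv

theorem deriv_const_mul_sin_mul :
    deriv (fun s => a * sin (ω * s)) = fun s => a * ω * cos (ω * s) :=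
  funext fun s => (hasDerivAt_const_mul_sin_mul a ω s).deriv

theorem deriv_deriv_const_mul_cos_mul :
    deriv (deriv fun s => a * cos (ω * s)) = fun s => -(a * ω ^ 2) * cos (ω * s) := by
  rw [deriv_const_mul_cos_mul, deriv_const_mul_sin_mul]
  funext s
  ring

theorem deriv_deriv_const_mul_sin_mul :
    deriv (deriv fun s => a * sin (ω * s)) = fun s => -(a * ω ^ 2) * sin (ω * s) := by
  rw [deriv_const_mul_sin_mul, deriv_const_mul_cos_mul]
  funext s
  ring

theorem sq_deriv_const_mul_cos_mul_add_sq_deriv_const_mul_sin_mul (s : ℝ) :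
    deriv (fun s => a * cos (ω * s)) s ^ 2 + deriv (fun s => a * sin (ω * s)) s ^ 2
      = a ^ 2 * ω ^ 2 := by
  rw [deriv_const_mul_cos_mul, deriv_const_mul_sin_mul]
  linear_combination a ^ 2 * ω ^ 2 * sin_sq_add_cos_sq (ω * s)

theorem sin_mul_deriv_cos_sub_cos_mul_deriv_sin (s : ℝ) :
    a * sin (ω * s) * deriv (fun s => a * cos (ω * s)) s
      - a * cos (ω * s) * deriv (fun s => a * sin (ω * s)) s = -(a ^ 2 * ω) := by
  rw [deriv_const_mul_cos_mul, deriv_const_mul_sin_mul]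
  linear_combination -(a ^ 2 * ω) * sin_sq_add_cos_sq (ω * s)

theorem prodMk_const_mul_cos_const_mul_sin_zero_ne_zero {a : ℝ} (ha : a ≠ 0) (t : ℝ) :
    (a * cos t, a * sin t, (0 : ℝ)) ≠ 0 := by
  intro h
  have hcos : a * cos t = 0 := congrArg Prod.fst h
  have hsin : a * sin t = 0 := congrArg (·.2.1) h
  have := sin_sq_add_cos_sq t
  simp_all

end Circle

theorem heisenberg_helicoidal_legendre_whirl_general
    (R ω : ℝ) (hRω : R ^ 2 * ω ^ 2 = 1)
    (x y z v : ℝ → ℝ)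
    (hx : x = fun s => R * Real.cos (ω * s))
    (hy : y = fun s => R * Real.sin (ω * s))
    (hz : z = fun s => R ^ 2 * ω * s)
    (hv : v = fun s => deriv z s + y s * deriv x s - x s * deriv y s) :
    ∀ s : ℝ,
      v s = 0 ∧
      (deriv x s) ^ 2 + (deriv y s) ^ 2 - (v s) ^ 2 = 1 ∧
      (deriv (deriv x) s - 2 * deriv y s * v s,
        deriv (deriv y) s + 2 * deriv x s * v s,
        deriv v s)
        = (-(R * ω ^ 2) * Real.cos (ω * s),
            -(R * ω ^ 2) * Real.sin (ω * s), (0 : ℝ)) ∧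
      (-(R * ω ^ 2) * Real.cos (ω * s),
        -(R * ω ^ 2) * Real.sin (ω * s), (0 : ℝ))
        ≠ ((0 : ℝ), (0 : ℝ), (0 : ℝ)) := by
  have legendre : v = fun _ => 0 := by
    funext s
    have hdz : deriv z s = R ^ 2 * ω := by simp [hz]
    simp only [hv, hdz, hx, hy]
    linear_combination sin_mul_deriv_cos_sub_cos_mul_deriv_sin R ω s
  have hκ : -(R * ω ^ 2) ≠ 0 := fun h =>
    one_ne_zero (hRω.symm.trans (by linear_combination -R * h))
  intro s
  subst hx hy
  refine ⟨by rw [legendre], ?_, ?_, prodMk_const_mul_cos_const_mul_sin_zero_ne_zero hκ _⟩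
  · rw [legendre, sq_deriv_const_mul_cos_mul_add_sq_deriv_const_mul_sin_mul, hRω]
    ring
  · rw [legendre, deriv_deriv_const_mul_cos_mul, deriv_deriv_const_mul_sin_mul, deriv_const]
    simp

/-- **The horizontal helicoidal Legendre contact whirl family
(Section 5.2.2).**  Let `R > 0`, `ω ≠ 0` with `R²ω² = 1`, and consider the
curve `α(s) = (R cos ωs, R sin ωs, R²ωs)` in the Lorentzian Heisenberg space,
with Reeb component `v = z' + y x' − x y'` of the tangent.  Then for every
`s`: (i) `v(s) = 0` (the curve is Legendre); (ii) `x'² + y'² − v² = 1` (unit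
spacelike); and (iii) the acceleration components
`(x'' − 2y'v, y'' + 2x'v, v')` equal
`(−Rω² cos ωs, −Rω² sin ωs, 0)`, a nonzero vector whose third component
vanishes. -/
theorem heisenberg_helicoidal_legendre_whirl
    (R ω : ℝ) (hR : 0 < R) (hω : ω ≠ 0) (hRω : R ^ 2 * ω ^ 2 = 1)
    (x y z v : ℝ → ℝ)
    (hx : x = fun s => R * Real.cos (ω * s))
    (hy : y = fun s => R * Real.sin (ω * s))
    (hz : z = fun s => R ^ 2 * ω * s)
    (hv : v = fun s => deriv z s + y s * deriv x s - x s * deriv y s) :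
    ∀ s : ℝ,
      v s = 0 ∧
      (deriv x s) ^ 2 + (deriv y s) ^ 2 - (v s) ^ 2 = 1 ∧
      (deriv (deriv x) s - 2 * deriv y s * v s,
        deriv (deriv y) s + 2 * deriv x s * v s,
        deriv v s)
        = (-(R * ω ^ 2) * Real.cos (ω * s),
            -(R * ω ^ 2) * Real.sin (ω * s), (0 : ℝ)) ∧
      (-(R * ω ^ 2) * Real.cos (ω * s),
        -(R * ω ^ 2) * Real.sin (ω * s), (0 : ℝ))
        ≠ ((0 : ℝ), (0 : ℝ), (0 : ℝ)) :=
  heisenberg_helicoidal_legendre_whirl_general R ω hRω x y z v hx hy hz hv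
end
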